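/- arXiv:2004.09110 — 2 statements merged into one kernel-verified Lean document; each statement's English description precedes it below -/
import Mathlib

section
/- Termination of the multiplicative Goodstein process: for every m ∈ ℕ, the sequence defined by G_0 = m and G_{i+1} = bch(G_i, i+2, i+3) − 1 (when G_i > 0) reaches 0 after finitely many steps. -/
/-- Multiplicative base change: replace base `k` by `l` hereditarily in the
base-`k` representation `m = k·p + q`, `0 ≤ q < k`. -/
def mbch (k l m : ℕ) : ℕ :=
  if h : m = 0 ∨ k < 2 then 0
  else l * mbch k l (m / k) + m % k
termination_by m
decreasing_by
  push_neg at h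
  exact Nat.div_lt_self (Nat.pos_of_ne_zero h.1) h.2

/-- The multiplicative Goodstein sequence starting at `m`:
`G_0 = m` and `G_(i+1) = bch(G_i, i+2, i+3) - 1` (truncated subtraction). -/
def Gm (m : ℕ) : ℕ → ℕ
  | 0 => m
  | i + 1 => mbch (i + 2) (i + 3) (Gm m i) - 1


/-!
Read `m` in base `k` and replace every power of `k` by the same power of `ω`; this gives an
ordinal below `ω ^ ω`. Raising the base from `k` to `l ≥ k` does not change the digits, hence
not the ordinal, and subtracting one strictly lowers it. So along the Goodstein sequence the
ordinals strictly decrease as long as the terms are nonzero, which cannot go on forever.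
-/

open Ordinal

noncomputable def ordVal (k m : ℕ) : Ordinal.{0} :=
  if _h : m = 0 ∨ k < 2 then 0
  else ω * ordVal k (m / k) + (m % k : ℕ)
termination_by m
decreasing_by exact Nat.div_lt_self (by omega) (by omega)

@[simp]
theorem ordVal_zero (k : ℕ) : ordVal k 0 = 0 := by
  simp [ordVal]

section BaseTwoOrMore

variable {k : ℕ}

theorem mbch_eq (hk : 2 ≤ k) (l m : ℕ) : mbch k l m = l * mbch k l (m / k) + m % k := by
  rcases eq_or_ne m 0 with rfl | hm
  · simp [mbch]
  · rw [mbch, dif_neg (by omega)]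

theorem ordVal_eq (hk : 2 ≤ k) (m : ℕ) : ordVal k m = ω * ordVal k (m / k) + (m % k : ℕ) := by
  rcases eq_or_ne m 0 with rfl | hm
  · simp
  · rw [ordVal, dif_neg (by omega)]

theorem ordVal_mul_add (hk : 2 ≤ k) {a r : ℕ} (hr : r < k) :
    ordVal k (k * a + r) = ω * ordVal k a + r := by
  rw [ordVal_eq hk, Nat.mul_add_div (by omega), Nat.div_eq_of_lt hr, Nat.mul_add_mod,
    Nat.mod_eq_of_lt hr, add_zero]

theorem ordVal_strictMono (hk : 2 ≤ k) : StrictMono (ordVal k) := by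
  intro a b hab
  induction b using Nat.strong_induction_on generalizing a with
  | _ b ih =>
    rw [ordVal_eq hk a, ordVal_eq hk b]
    rcases (Nat.div_le_div_right (c := k) hab.le).lt_or_eq with hdiv | hdiv
    · calc ω * ordVal k (a / k) + (a % k : ℕ)
          < ω * ordVal k (a / k) + ω := (add_lt_add_iff_left _).2 (natCast_lt_omega0 _)
        _ = ω * (ordVal k (a / k) + 1) := (mul_add_one _ _).symm
        _ ≤ ω * ordVal k (b / k) :=
            mul_le_mul_right (Order.add_one_le_of_lt (ih _ (Nat.div_lt_self (by omega) hk) hdiv)) _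
        _ ≤ _ := le_self_add
    · have hmod : a % k < b % k := by
        have := Nat.div_add_mod a k
        have := Nat.div_add_mod b k
        rw [hdiv] at *
        omega
      rw [hdiv]
      exact (add_lt_add_iff_left _).2 (Nat.cast_lt.2 hmod)

theorem ordVal_mbch (hk : 2 ≤ k) {l : ℕ} (hl : k ≤ l) (m : ℕ) :
    ordVal l (mbch k l m) = ordVal k m := by
  induction m using Nat.strong_induction_on with
  | _ m ih =>
    rcases eq_or_ne m 0 with rfl | hm
    · simp [mbch]
    · rw [mbch_eq hk, ordVal_mul_add (hk.trans hl) ((Nat.mod_lt _ (by omega)).trans_le hl),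
        ih _ (Nat.div_lt_self (by omega) hk), ← ordVal_eq hk]

end BaseTwoOrMore

theorem ordVal_Gm_succ_lt {m i : ℕ} (hi : Gm m i ≠ 0) :
    ordVal (i + 3) (Gm m (i + 1)) < ordVal (i + 2) (Gm m i) := by
  have hk : 2 ≤ i + 2 := by omega
  have hl : i + 2 ≤ i + 3 := by omega
  have hpos : mbch (i + 2) (i + 3) (Gm m i) ≠ 0 := by
    intro h0
    refine hi ((ordVal_strictMono hk).injective ?_)
    rw [← ordVal_mbch hk hl, h0, ordVal_zero, ordVal_zero]
  calc ordVal (i + 3) (mbch (i + 2) (i + 3) (Gm m i) - 1)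
      < ordVal (i + 3) (mbch (i + 2) (i + 3) (Gm m i)) :=
        ordVal_strictMono (k := i + 3) (by omega) (by omega)
    _ = ordVal (i + 2) (Gm m i) := ordVal_mbch hk hl _

/-- Termination of the multiplicative Goodstein process: for every `m`, the
sequence `G_0 = m`, `G_(i+1) = bch(G_i, i+2, i+3) - 1` reaches `0`. -/
theorem multiplicative_goodstein_terminates (m : ℕ) : ∃ i : ℕ, Gm m i = 0 := by
  obtain ⟨i, hi⟩ := WellFounded.not_rel_apply_succ (r := (· < ·))
    fun i => ordVal (i + 2) (Gm m i)
  exact ⟨i, not_imp_comm.1 ordVal_Gm_succ_lt hi⟩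
end

section
/- Base-change maximality of hereditary exponential normal forms: for every closed term τ built from 0, addition, and base-k exponentiation, with value m, and every ℓ > k ≥ 2, the value of τ with every k replaced by ℓ is at most bch(m,k,ℓ), the base-change of the hereditary base-k normal form of m. Consequently, if m < n and 2 ≤ k < ℓ then bch(m,k,ℓ) < bch(n,k,ℓ). -/
/-- Terms of the exponential notation system `E_k`: generated by `0`,
addition, and base-`k` exponentiation `x ↦ k^x`. -/
inductive ETerm : Type
  | zero : ETerm
  | add : ETerm → ETerm → ETerm
  | expBase : ETerm → ETerm

/-- Value of an exponential term at base `k`. -/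
def ETerm.val (k : ℕ) : ETerm → ℕ
  | .zero => 0
  | .add s t => s.val k + t.val k
  | .expBase s => k ^ s.val k

/-- Norm (number of symbols) of an exponential term. -/
def ETerm.norm : ETerm → ℕ
  | .zero => 1
  | .add s t => 1 + s.norm + t.norm
  | .expBase s => 1 + s.norm

/-- Exponential base change: replace base `k` by `l` hereditarily in the
base-`k` normal form `m = k^r + b`, `k^r ≤ m < k^(r+1)`. -/
def ebch (k l m : ℕ) : ℕ :=
  if h : m = 0 ∨ k < 2 then 0
  else l ^ ebch k l (Nat.log k m) + ebch k l (m - k ^ Nat.log k m)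
termination_by m
decreasing_by
  · push_neg at h
    exact Nat.log_lt_self k h.1
  · push_neg at h
    exact Nat.sub_lt (Nat.pos_of_ne_zero h.1) (pow_pos (by omega) _)


/-
Adding one power `k^t` to `c = k^s + x` raises the base change by at least `l^{bch t}`, by strong
induction on `c`. If `s < t` the new power heads the normal form. If adding `k^t` causes no carry
past position `s`, induct on `x`. Otherwise the digits of `c` in positions `t, …, s` are all
`k - 1` and the carry replaces them by a single `k^(s+1)`; this costs nothing because
`k · l^{bch i} ≤ l^{bch (i+1)}`, by the strict monotonicity already available below `c`.
Splitting `b` into powers gives superadditivity `bch a + bch b ≤ bch (a + b)`, and `b = 1` gives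
strict monotonicity. The bound on terms is then a structural induction, using
`bch (k^x) = l^{bch x}` for exponentials and superadditivity for sums.
-/

lemma ebch_zero (k l : ℕ) : ebch k l 0 = 0 := by
  rw [ebch]; simp

variable {k l : ℕ}

lemma exists_eq_pow_add (hk : 2 ≤ k) {n : ℕ} (hn : n ≠ 0) :
    ∃ s x, n = k ^ s + x ∧ k ^ s + x < k ^ (s + 1) := by
  have hle := Nat.pow_log_le_self k hn
  refine ⟨Nat.log k n, n - k ^ Nat.log k n, (Nat.add_sub_cancel' hle).symm, ?_⟩
  rw [Nat.add_sub_cancel' hle]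
  exact Nat.lt_pow_succ_log_self (by omega) n

lemma pow_add_lt_pow_succ (hk : 2 ≤ k) {t x : ℕ} (hx : x < k ^ t) :
    k ^ t + x < k ^ (t + 1) := by
  rw [pow_succ]; nlinarith

lemma ebch_pow_add (l : ℕ) (hk : 2 ≤ k) {s x : ℕ} (h : k ^ s + x < k ^ (s + 1)) :
    ebch k l (k ^ s + x) = l ^ ebch k l s + ebch k l x := by
  have hpos : 0 < k ^ s := Nat.pow_pos (by omega)
  have hlog : Nat.log k (k ^ s + x) = s := Nat.log_eq_of_pow_le_of_lt_pow le_self_add h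
  rw [ebch, dif_neg (by omega), hlog, Nat.add_sub_cancel_left]

lemma ebch_pow (l : ℕ) (hk : 2 ≤ k) (t : ℕ) : ebch k l (k ^ t) = l ^ ebch k l t := by
  have h := pow_add_lt_pow_succ hk (t := t) (x := 0) (Nat.pow_pos (by omega))
  simpa [ebch_zero] using ebch_pow_add l hk h

lemma ebch_mul_pow_add (l : ℕ) (hk : 2 ≤ k) {d s x : ℕ} (hd : d < k) (hx : x < k ^ s) :
    ebch k l (d * k ^ s + x) = d * l ^ ebch k l s + ebch k l x := by
  induction d with
  | zero => simp
  | succ d ih =>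
    have h : k ^ s + (d * k ^ s + x) < k ^ (s + 1) := by
      have : (d + 2) * k ^ s ≤ k * k ^ s := Nat.mul_le_mul_right _ hd
      rw [pow_succ]; nlinarith
    rw [show (d + 1) * k ^ s + x = k ^ s + (d * k ^ s + x) by ring, ebch_pow_add l hk h,
      ih (by omega)]
    ring

/-- The base-`k` digits of `k^u - k^t + e` in positions `t, …, u-1` are all `k - 1`, so adding
`l^{bch t}` to its base change carries up to `l^{bch u}`. -/
lemma ebch_pow_sub_pow_add_add_le (hk : 2 ≤ k) (hkl : k ≤ l) {t e u : ℕ} (he : e < k ^ t)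
    (htu : t ≤ u) (hmono : ∀ i < u, ebch k l i < ebch k l (i + 1)) :
    ebch k l (k ^ u - k ^ t + e) + l ^ ebch k l t ≤ l ^ ebch k l u + ebch k l e := by
  induction u, htu using Nat.le_induction with
  | base => simp [add_comm]
  | succ u htu ih =>
    have hktu : k ^ t ≤ k ^ u := Nat.pow_le_pow_right (by omega) htu
    have hk1 : ∀ X : ℕ, (k - 1) * X + X = k * X := fun X => by
      rw [← Nat.succ_mul, Nat.succ_eq_add_one, Nat.sub_add_cancel (by omega)]
    have hsplit : k ^ (u + 1) - k ^ t + e = (k - 1) * k ^ u + (k ^ u - k ^ t + e) := by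
      have := hk1 (k ^ u)
      rw [pow_succ']; omega
    have hcarry : k * l ^ ebch k l u ≤ l ^ ebch k l (u + 1) :=
      calc k * l ^ ebch k l u ≤ l ^ (ebch k l u + 1) := by
            rw [pow_succ']; exact Nat.mul_le_mul_right _ hkl
        _ ≤ l ^ ebch k l (u + 1) := Nat.pow_le_pow_right (by omega) (hmono u (by omega))
    rw [hsplit, ebch_mul_pow_add l hk (by omega) (by omega)]
    have := ih (fun i hi => hmono i (by omega))
    have := hk1 (l ^ ebch k l u)
    omega

theorem le_ebch_add_pow (hk : 2 ≤ k) (hkl : k ≤ l) (c t : ℕ) :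
    ebch k l c + l ^ ebch k l t ≤ ebch k l (c + k ^ t) := by
  induction c using Nat.strong_induction_on generalizing t with
  | _ c ih =>
    rcases eq_or_ne c 0 with rfl | hc
    · simp [ebch_zero, ebch_pow l hk]
    obtain ⟨s, x, rfl, hsx⟩ := exists_eq_pow_add hk hc
    have hks : s < k ^ s := Nat.lt_pow_self (by omega)
    rcases lt_or_ge s t with hst | hts
    · have hlt : k ^ (s + 1) ≤ k ^ t := Nat.pow_le_pow_right (by omega) hst
      have h := ebch_pow_add l hk (pow_add_lt_pow_succ hk (t := t) (x := k ^ s + x) (by omega))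
      rw [add_comm _ (k ^ t), h, add_comm]
    rcases lt_or_ge (k ^ s + x + k ^ t) (k ^ (s + 1)) with hnc | hcar
    · rw [ebch_pow_add l hk hsx, add_assoc (k ^ s), ebch_pow_add l hk (by omega)]
      have := ih x (by omega) t
      omega
    · have hts' : k ^ t ≤ k ^ (s + 1) := Nat.pow_le_pow_right (by omega) (by omega)
      set e := k ^ s + x + k ^ t - k ^ (s + 1)
      have he : e < k ^ t := by omega
      have hmono : ∀ i < s + 1, ebch k l i < ebch k l (i + 1) := fun i hi => by
        simpa [ebch_zero] using ih i (by omega) 0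
      have h := ebch_pow_add l hk (pow_add_lt_pow_succ hk (t := s + 1) (x := e) (by omega))
      rw [show k ^ s + x + k ^ t = k ^ (s + 1) + e by omega, h,
        show k ^ s + x = k ^ (s + 1) - k ^ t + e by omega]
      exact ebch_pow_sub_pow_add_add_le hk hkl he (by omega) hmono

theorem ebch_strictMono (hk : 2 ≤ k) (hkl : k ≤ l) : StrictMono (ebch k l) :=
  strictMono_nat_of_lt_succ fun n => by simpa [ebch_zero] using le_ebch_add_pow hk hkl n 0

theorem ebch_add_ebch_le (hk : 2 ≤ k) (hkl : k ≤ l) (a b : ℕ) :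
    ebch k l a + ebch k l b ≤ ebch k l (a + b) := by
  induction b using Nat.strong_induction_on with
  | _ b ih =>
    rcases eq_or_ne b 0 with rfl | hb
    · simp [ebch_zero]
    obtain ⟨t, y, rfl, hty⟩ := exists_eq_pow_add hk hb
    have hpos : 0 < k ^ t := Nat.pow_pos (by omega)
    rw [ebch_pow_add l hk hty, show a + (k ^ t + y) = a + y + k ^ t by ring]
    have := ih y (by omega)
    have := le_ebch_add_pow hk hkl (a + y) t
    omega

theorem ETerm.val_le_ebch_val (hk : 2 ≤ k) (hkl : k ≤ l) (τ : ETerm) :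
    τ.val l ≤ ebch k l (τ.val k) := by
  induction τ with
  | zero => simp [ETerm.val, ebch_zero]
  | add s t ihs iht =>
    calc s.val l + t.val l ≤ ebch k l (s.val k) + ebch k l (t.val k) := by omega
      _ ≤ ebch k l (s.val k + t.val k) := ebch_add_ebch_le hk hkl _ _
  | expBase s ih =>
    calc l ^ s.val l ≤ l ^ ebch k l (s.val k) := Nat.pow_le_pow_right (by omega) ih
      _ = ebch k l (k ^ s.val k) := (ebch_pow l hk _).symm

/-- Base-change maximality of hereditary exponential normal forms: for every
closed exponential term `τ` and `ℓ > k ≥ 2`, the value of `τ` with `k`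
replaced by `ℓ` is at most `bch(val τ, k, ℓ)`; consequently the base-change
operation is strictly monotone. -/
theorem eterm_base_change_maximality (k l : ℕ) (hk : 2 ≤ k) (hl : k < l) :
    (∀ τ : ETerm, τ.val l ≤ ebch k l (τ.val k)) ∧
      ∀ m n : ℕ, m < n → ebch k l m < ebch k l n :=
  ⟨ETerm.val_le_ebch_val hk hl.le, fun _ _ h => ebch_strictMono hk hl.le h⟩
end
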